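/- arXiv:2509.13118 — 8 statements merged into one kernel-verified Lean document; each statement's English description precedes it below -/
import Mathlib

section
/- Let d ≥ 2. Every combinatorial description (CD, H) of W_d that is compatible with RT via S_n-equivariant surjections p_n : RT(n) → CD(n) satisfies that each p_n is a bijection; in other words, in dimension d ≠ 1 the rooted trees are the only combinatorial description of W_d compatible with RT. -/
/-!
For `d ≥ 2` the elementary differential already determines the tree, so `p n τ = p n τ'` forces
`F(τ) = H (p n τ) = H (p n τ') = F(τ')` and hence `τ = τ'`.

To see that `F(τ)` determines `τ`, feed in exponentials `f^v(y) = exp (γ_v ⬝ y) c_v`. Giving the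
root the virtual parent `none` with exponent vector `Γ none = e_j`, and putting `Γ (some v) = γ_v`,
the `j`-th coordinate of `F(τ)(f)(0)` factorises as `∏_w c_w ⬝ Γ (parent w)`. So `F(τ)` knows the
parent map, which determines the tree: if `τ` and `τ'` give `v₀` different parents, take
`c_{v₀} = e_z`, `c_w = (1, …, 1)` otherwise, and `Γ = e_o` at the `τ`-parent of `v₀`, `Γ = e_z`
elsewhere (`z ≠ o`). The product is then `0` for `τ` and `1` for `τ'`.
-/

open Finset

/-- The type of smooth maps from `ℝ^d` to `ℝ^d` (i.e. `C_d = C^∞(ℝ^d, ℝ^d)`). -/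
def SmoothMapD (d : ℕ) : Type :=
  {f : (Fin d → ℝ) → (Fin d → ℝ) // ∀ k : ℕ, ContDiff ℝ k f}

/-- A rooted tree on a finite vertex set `V`: a set `E` of (parent, child) edges together with a
root, such that every non-root vertex has a unique parent, the root has no parent, and every
vertex reaches the root by iteratively passing to its parent. -/
structure RTree (V : Type) [Fintype V] [DecidableEq V] where
  E : Finset (V × V)
  root : V
  parent_unique : ∀ v : V, v ≠ root → ∃! u : V, (u, v) ∈ E
  root_no_parent : ∀ u : V, (u, root) ∉ E
  reaches_root : ∀ v : V, Relation.ReflTransGen (fun a b : V => (b, a) ∈ E) v root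

/-- The children of a vertex `v` of a rooted tree: `C_v = {w | (v, w) ∈ E}`. -/
def RTree.children {V : Type} [Fintype V] [DecidableEq V] (τ : RTree V) (v : V) :
    Finset V :=
  Finset.univ.filter (fun w => (v, w) ∈ τ.E)

/-- Partial derivative `∂_i` of a scalar function on `ℝ^d`. -/
noncomputable def pd {d : ℕ} (i : Fin d) (g : (Fin d → ℝ) → ℝ) : (Fin d → ℝ) → ℝ :=
  fun x => fderiv ℝ g x (Pi.single i 1)

/-- Iterated partial derivatives along a list of directions. -/
noncomputable def pdList {d : ℕ} (l : List (Fin d)) (g : (Fin d → ℝ) → ℝ) : (Fin d → ℝ) → ℝ :=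
  l.foldr pd g

/-- The elementary differential of a rooted tree, in closed form: the `j`-th component of
`F(τ)((f^v)_v)(x)` is the sum over all choices of an index `idx v ∈ [d]` for each vertex `v`,
subject to `idx root = j`, of the product over all vertices `v` of
`∂_{idx c₁} ⋯ ∂_{idx c_k} (f^v)_{idx v} (x)` where `c₁, …, c_k` are the children of `v`.
For smooth inputs this agrees with the usual recursive definition. -/
noncomputable def elemDiff {V : Type} [Fintype V] [DecidableEq V] {d : ℕ} (τ : RTree V)
    (f : V → ((Fin d → ℝ) → (Fin d → ℝ))) : (Fin d → ℝ) → (Fin d → ℝ) :=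
  fun x j =>
    ∑ idx : V → Fin d,
      if idx τ.root = j then
        ∏ v : V, pdList ((τ.children v).toList.map idx) (fun y => f v y (idx v)) x
      else 0

/-- The elementary differential `F(τ)` evaluated on smooth maps. -/
noncomputable def Fel (d : ℕ) {V : Type} [Fintype V] [DecidableEq V] (τ : RTree V)
    (f : V → SmoothMapD d) : (Fin d → ℝ) → (Fin d → ℝ) :=
  elemDiff τ (fun v => (f v).1)
/-- `W_d(n)`: the span of the elementary differentials of rooted trees on `n` vertices, inside
the space of functionals `(C_d)^n → C_d`. -/
noncomputable def Wspace (d n : ℕ) :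
    Submodule ℝ ((Fin n → SmoothMapD d) → (Fin d → ℝ) → (Fin d → ℝ)) :=
  Submodule.span ℝ (Set.range (fun τ : RTree (Fin n) => Fel d τ))
/-- The action of a permutation `σ ∈ S_n` on a functional, permuting its `n` inputs. -/
def permAct {d n : ℕ} (σ : Equiv.Perm (Fin n))
    (w : (Fin n → SmoothMapD d) → (Fin d → ℝ) → (Fin d → ℝ)) :
    (Fin n → SmoothMapD d) → (Fin d → ℝ) → (Fin d → ℝ) :=
  fun f => w (fun i => f (σ i))

namespace RTree

variable {V : Type} [Fintype V] [DecidableEq V]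

noncomputable def parent (τ : RTree V) (v : V) : Option V :=
  if h : v = τ.root then none else some (τ.parent_unique v h).exists.choose

@[simp]
lemma parent_root (τ : RTree V) : τ.parent τ.root = none := by
  simp [parent]

lemma parent_eq_none_iff (τ : RTree V) {v : V} : τ.parent v = none ↔ v = τ.root := by
  unfold parent
  split_ifs with h <;> simp [h]

lemma parent_eq_some_iff (τ : RTree V) {u v : V} : τ.parent v = some u ↔ (u, v) ∈ τ.E := by
  unfold parent
  split_ifs with h
  · simpa [h] using τ.root_no_parent u
  · have hex := τ.parent_unique v h
    exact Option.some_inj.trans ⟨fun hu => hu ▸ hex.exists.choose_spec,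
      fun hu => hex.unique hex.exists.choose_spec hu⟩

lemma mem_children_iff (τ : RTree V) {v w : V} : w ∈ τ.children v ↔ τ.parent w = some v := by
  simp [children, parent_eq_some_iff]

lemma parent_injective : Function.Injective (parent : RTree V → V → Option V) := by
  intro τ τ' h
  have hroot : τ.root = τ'.root := by
    rw [← τ'.parent_eq_none_iff, ← h, parent_root]
  have hE : τ.E = τ'.E := by
    ext ⟨u, v⟩
    rw [← parent_eq_some_iff, ← parent_eq_some_iff, h]
  cases τ; cases τ'
  simp_all

lemma prod_parent {M : Type*} [CommMonoid M] (τ : RTree V) (g : Option V → V → M) :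
    ∏ w, g (τ.parent w) w = g none τ.root * ∏ v, ∏ w ∈ τ.children v, g (some v) w := by
  rw [Fintype.prod_eq_mul_prod_compl τ.root, parent_root]
  congr 1
  rw [Finset.prod_comm' (s' := fun w => (τ.parent w).toFinset) (t' := {τ.root}ᶜ)]
  · refine Finset.prod_congr rfl fun w hw => ?_
    have hw : τ.parent w ≠ none := by simpa [parent_eq_none_iff] using hw
    obtain ⟨u, hu⟩ := Option.ne_none_iff_exists'.1 hw
    simp [hu]
  · intro v w
    simp only [mem_univ, true_and, mem_children_iff, Option.mem_toFinset, Option.mem_def,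
      mem_compl, mem_singleton, iff_self_and]
    rintro h rfl
    simp at h

end RTree

open Matrix

section ExpInputs

variable {d : ℕ}

lemma pd_mul_exp_dotProduct (a : ℝ) (γ : Fin d → ℝ) (i : Fin d) :
    pd i (fun y => a * Real.exp (γ ⬝ᵥ y)) = fun x => a * γ i * Real.exp (γ ⬝ᵥ x) := by
  funext x
  let L : (Fin d → ℝ) →L[ℝ] ℝ := LinearMap.toContinuousLinearMap (dotProductBilin ℝ ℝ γ)
  have hL : HasFDerivAt (fun y => a * Real.exp (γ ⬝ᵥ y)) (a • Real.exp (γ ⬝ᵥ x) • L) x :=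
    ((Real.hasDerivAt_exp (L x)).comp_hasFDerivAt x L.hasFDerivAt).const_mul a
  simp [pd, L, hL.fderiv, dotProduct_single]
  ring

lemma pdList_mul_exp_dotProduct (a : ℝ) (γ : Fin d → ℝ) (l : List (Fin d)) :
    pdList l (fun y => a * Real.exp (γ ⬝ᵥ y)) =
      fun x => a * (l.map γ).prod * Real.exp (γ ⬝ᵥ x) := by
  induction l with
  | nil => simp [pdList]
  | cons i l ih =>
    change pd i (pdList l _) = _
    rw [ih, pd_mul_exp_dotProduct]
    funext x
    simp only [List.map_cons, List.prod_cons]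
    ring

noncomputable def expMap (c γ : Fin d → ℝ) : SmoothMapD d :=
  ⟨fun y => Real.exp (γ ⬝ᵥ y) • c, fun _ =>
    (Real.contDiff_exp.comp
      (LinearMap.toContinuousLinearMap (dotProductBilin ℝ ℝ γ)).contDiff).smul contDiff_const⟩

variable {V : Type} [Fintype V] [DecidableEq V]

lemma pdList_expMap_apply_zero (c γ : Fin d → ℝ) (l : List (Fin d)) (i : Fin d) :
    pdList l (fun y => (expMap c γ).1 y i) 0 = c i * (l.map γ).prod := by
  have h : (fun y => (expMap c γ).1 y i) = fun y => c i * Real.exp (γ ⬝ᵥ y) := by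
    funext y
    simp [expMap, mul_comm]
  simp [h, pdList_mul_exp_dotProduct]

lemma Fel_expMap_apply_zero (τ : RTree V) (c : V → Fin d → ℝ) (Γ : Option V → Fin d → ℝ)
    (j : Fin d) (hΓ : Γ none = Pi.single j 1) :
    Fel d τ (fun v => expMap (c v) (Γ (some v))) 0 j = ∏ w, c w ⬝ᵥ Γ (τ.parent w) := by
  simp only [dotProduct, Fintype.prod_sum, Fel, elemDiff, pdList_expMap_apply_zero, List.map_map,
    Function.comp_def, Finset.prod_map_toList]
  refine Finset.sum_congr rfl fun idx _ => ?_
  rw [Finset.prod_mul_distrib, Finset.prod_mul_distrib, τ.prod_parent (fun q w => Γ q (idx w)),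
    hΓ, Pi.single_apply]
  split_ifs <;> simp

theorem Fel_injective [Nontrivial (Fin d)] :
    Function.Injective (Fel d : RTree V → _) := by
  intro τ τ' h
  obtain ⟨z, o, hzo⟩ := exists_pair_ne (Fin d)
  refine RTree.parent_injective (funext fun v₀ => by_contra fun hne => ?_)
  let e : Option V → Fin d := fun q => if q = τ.parent v₀ then o else z
  let Γ : Option V → Fin d → ℝ := fun q => Pi.single (e q) 1
  let c : V → Fin d → ℝ := fun w => if w = v₀ then Pi.single z 1 else 1
  have key := congrFun (congrFun (congrFun h fun v => expMap (c v) (Γ (some v))) 0) (e none)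
  rw [Fel_expMap_apply_zero τ c Γ _ rfl, Fel_expMap_apply_zero τ' c Γ _ rfl] at key
  have h0 : ∏ w, c w ⬝ᵥ Γ (τ.parent w) = 0 :=
    Finset.prod_eq_zero (mem_univ v₀) (by simp [c, Γ, e, hzo])
  have h1 : ∏ w, c w ⬝ᵥ Γ (τ'.parent w) = 1 := Finset.prod_eq_one fun w _ => by
    by_cases hw : w = v₀
    · subst hw
      simp [c, Γ, e, Ne.symm hne]
    · simp [c, Γ, hw]
  exact zero_ne_one (h0.symm.trans (key.trans h1))

end ExpInputs

theorem rooted_trees_only_description_compatible_with_RT_general (d : ℕ) (hd : 2 ≤ d)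
    (CD : ℕ → Type)
    (H : ∀ n, CD n → ((Fin n → SmoothMapD d) → (Fin d → ℝ) → (Fin d → ℝ)))
    (p : ∀ n, RTree (Fin n) → CD n)
    (hp_surj : ∀ n, Function.Surjective (p n))
    (hp_comp : ∀ (n : ℕ) (τ : RTree (Fin n)), Fel d τ = H n (p n τ)) :
    ∀ n, Function.Bijective (p n) := by
  have : Nontrivial (Fin d) := Fin.nontrivial_iff_two_le.2 hd
  refine fun n => ⟨fun τ τ' h => Fel_injective (d := d) ?_, hp_surj n⟩
  rw [hp_comp, hp_comp, h]

/-- In dimension `d ≥ 2`, every combinatorial description `(CD, H)` of `W_d` that is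
compatible with `RT` via `S_n`-equivariant surjections `p_n : RT(n) → CD(n)` satisfies that
each `p_n` is a bijection: the rooted trees are the only combinatorial description of `W_d`
compatible with `RT`. -/
theorem rooted_trees_only_description_compatible_with_RT (d : ℕ) (hd : 2 ≤ d)
    (CD : ℕ → Type) (act : ∀ n, Equiv.Perm (Fin n) → CD n → CD n)
    (H : ∀ n, CD n → ((Fin n → SmoothMapD d) → (Fin d → ℝ) → (Fin d → ℝ)))
    (p : ∀ n, RTree (Fin n) → CD n)
    (hact_one : ∀ n c, act n 1 c = c)
    (hact_mul : ∀ n σ π c, act n (σ * π) c = act n σ (act n π c))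
    (hH_equiv : ∀ n σ c, H n (act n σ c) = permAct σ (H n c))
    (hH_span : ∀ n, Submodule.span ℝ (Set.range (H n)) = Wspace d n)
    (hp_surj : ∀ n, Function.Surjective (p n))
    (hp_equiv : ∀ (n : ℕ) (σ : Equiv.Perm (Fin n)) (τ τ' : RTree (Fin n)),
      τ'.E = τ.E.image (fun e => (σ e.1, σ e.2)) → τ'.root = σ τ.root →
      p n τ' = act n σ (p n τ))
    (hp_comp : ∀ (n : ℕ) (τ : RTree (Fin n)), Fel d τ = H n (p n τ)) :
    ∀ n, Function.Bijective (p n) :=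
  rooted_trees_only_description_compatible_with_RT_general d hd CD H p hp_surj hp_comp
end

section
/- Let d ≥ 2 and n ≥ 1. If τ_1, τ_2 ∈ RT(n) and λ ∈ ℝ satisfy λ·F(τ_1)(f^1,…,f^n) = F(τ_2)(f^1,…,f^n) for all f^1,…,f^n ∈ C_d, then λ = 1 and τ_1 = τ_2. In particular, the map F : RT(n) → W_d(n) is injective for every d ≥ 2. -/
open Finset

/- ### Auxiliary development -/

noncomputable def linf {d : ℕ} (b : Fin d → ℝ) : (Fin d → ℝ) →L[ℝ] ℝ :=
  ∑ i, b i • (ContinuousLinearMap.proj i : ((Fin d → ℝ)) →L[ℝ] ℝ)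

lemma pd_exp {d : ℕ} (c : ℝ) (b : Fin d → ℝ) (i : Fin d) :
    pd i (fun y => c * Real.exp (linf b y)) = fun y => (c * b i) * Real.exp (linf b y) := by
  funext x
  have h1 : HasFDerivAt (fun y => c * Real.exp (linf b y))
      ((c * Real.exp (linf b x)) • (linf b)) x := by
    simpa [smul_smul] using ((linf b).hasFDerivAt (x := x)).exp.const_mul c
  rw [pd, h1.fderiv]
  have h2 : (linf b) (Pi.single i 1) = b i := by
    simp [linf, Pi.single_apply, mul_ite]
  simp [h2]
  ring

lemma pdList_exp {d : ℕ} (l : List (Fin d)) (c : ℝ) (b : Fin d → ℝ) :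
    pdList l (fun y => c * Real.exp (linf b y))
      = fun y => (c * (l.map b).prod) * Real.exp (linf b y) := by
  induction l with
  | nil => simp [pdList]
  | cons a l ih =>
      have h0 : pdList (a :: l) (fun y => c * Real.exp (linf b y))
          = pd a (pdList l (fun y => c * Real.exp (linf b y))) := rfl
      rw [h0, ih, pd_exp]
      funext y
      simp
      ring

lemma smooth_exp {d : ℕ} (c b : Fin d → ℝ) (k : ℕ) :
    ContDiff ℝ k (fun (x : Fin d → ℝ) (j : Fin d) => c j * Real.exp (linf b x)) := by
  apply contDiff_pi.2
  intro j
  exact contDiff_const.mul ((linf b).contDiff.exp)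

noncomputable def mkf {V : Type} {d : ℕ} (c b : V → Fin d → ℝ) : V → SmoothMapD d :=
  fun v => ⟨fun x j => c v j * Real.exp (linf (b v) x), fun k => smooth_exp (c v) (b v) k⟩

lemma Fel_mkf {V : Type} [Fintype V] [DecidableEq V] {d : ℕ} (τ : RTree V)
    (c b : V → Fin d → ℝ) (j : Fin d) :
    Fel d τ (mkf c b) 0 j =
      ∑ idx : V → Fin d, (if idx τ.root = j then
        ∏ v, (c v (idx v) * ∏ w ∈ τ.children v, b v (idx w)) else 0) := by
  unfold Fel elemDiff mkf
  apply Finset.sum_congr rfl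
  intro idx _
  split
  · apply Finset.prod_congr rfl
    intro v _
    rw [pdList_exp]
    simp [List.map_map, Finset.prod_map_toList]
  · rfl

lemma sum_Fel {V : Type} [Fintype V] [DecidableEq V] {d : ℕ} (τ : RTree V)
    (c b : V → Fin d → ℝ) :
    ∑ j, Fel d τ (mkf c b) 0 j =
      ∑ idx : V → Fin d, ∏ v, (c v (idx v) * ∏ w ∈ τ.children v, b v (idx w)) := by
  simp only [Fel_mkf]
  rw [Finset.sum_comm]
  apply Finset.sum_congr rfl
  intro idx _
  simp

lemma sum_prod_swap {V : Type} [Fintype V] [DecidableEq V] {d : ℕ} (g : V → Fin d → ℝ) :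
    ∑ idx : V → Fin d, ∏ v, g v (idx v) = ∏ v, ∑ i, g v i := by
  rw [Finset.prod_univ_sum]
  rw [Fintype.piFinset_univ]

/- The λ-test: all inputs `exp(∑ xᵢ)` in each coordinate. -/
lemma sum_Fel_ones {V : Type} [Fintype V] [DecidableEq V] {d : ℕ} (τ : RTree V) :
    ∑ j, Fel d τ (mkf (fun _ _ => (1:ℝ)) (fun _ _ => (1:ℝ))) 0 j
      = (d : ℝ) ^ (Fintype.card V) := by
  rw [sum_Fel]
  have h1 : ∀ idx : V → Fin d,
      ∏ v, ((fun _ _ => (1:ℝ)) v (idx v) * ∏ w ∈ τ.children v, (1:ℝ)) = 1 := by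
    intro idx; simp
  rw [Finset.sum_congr rfl (fun idx _ => h1 idx)]
  simp [Finset.card_univ]

section EdgeTest

variable {V : Type} [Fintype V] [DecidableEq V] {d : ℕ}

variable (i0 i1 : Fin d)

noncomputable def ccf : Fin d → ℝ := fun i => if i = i0 then 1 else if i = i1 then -1 else 0

noncomputable def bbf : Fin d → ℝ := fun i => if i = i0 then 2 else 1

lemma sum_ccf (h01 : i0 ≠ i1) : ∑ i, ccf i0 i1 i = 0 := by
  have h1 : ∀ i, ccf i0 i1 i = (if i = i0 then (1:ℝ) else 0) + (if i = i1 then -1 else 0) := by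
    intro i
    unfold ccf
    by_cases h : i = i0 <;> by_cases h' : i = i1
    · exact absurd (h.symm.trans h') h01
    · simp [h, h', h01, Ne.symm h01]
    · simp [h, h', h01, Ne.symm h01]
    · simp [h, h', h01, Ne.symm h01]
  simp [h1, Finset.sum_add_distrib]

lemma sum_ccf_bbf (h01 : i0 ≠ i1) : ∑ i, ccf i0 i1 i * bbf i0 i = 1 := by
  have h1 : ∀ i, ccf i0 i1 i * bbf i0 i
      = (if i = i0 then (2:ℝ) else 0) + (if i = i1 then -1 else 0) := by
    intro i
    unfold ccf bbf
    by_cases h : i = i0 <;> by_cases h' : i = i1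
    · exact absurd (h.symm.trans h') h01
    · simp [h, h', h01, Ne.symm h01]
    · simp [h, h', h01, Ne.symm h01]
    · simp [h, h', h01, Ne.symm h01]
  simp [h1, Finset.sum_add_distrib]
  norm_num

lemma sum_bbf : ∑ i, bbf i0 i = (d : ℝ) + 1 := by
  have h1 : ∀ i, bbf i0 i = (if i = i0 then (1:ℝ) else 0) + 1 := by
    intro i
    unfold bbf
    by_cases h : i = i0
    · simp [h]; norm_num
    · simp [h]
  simp [h1, Finset.sum_add_distrib]
  ring

/-- The edge-test value. -/
noncomputable def Ttest (τ : RTree V) (u w : V) : ℝ :=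
  ∑ j, Fel d τ (mkf (fun v i => if v = w then ccf i0 i1 i else 1)
      (fun v i => if v = u then bbf i0 i else 1)) 0 j

lemma Ttest_eq (τ : RTree V) (u w : V) :
    Ttest i0 i1 τ u w =
      ∏ v, ∑ i, ((if v = w then ccf i0 i1 i else 1) *
        (if (u, v) ∈ τ.E then bbf i0 i else 1)) := by
  unfold Ttest
  rw [sum_Fel, ← sum_prod_swap]
  apply Finset.sum_congr rfl
  intro idx _
  rw [Finset.prod_mul_distrib, Finset.prod_mul_distrib]
  congr 1
  rw [Finset.prod_eq_single u (fun v _ hv => by simp [hv])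
    (fun hu => absurd (Finset.mem_univ u) hu)]
  simp only [if_pos rfl]
  rw [show τ.children u = Finset.univ.filter (fun x => (u, x) ∈ τ.E) from rfl,
    Finset.prod_filter]
  simp

lemma Ttest_pos (h01 : i0 ≠ i1) (hd : 0 < d) (τ : RTree V) (u w : V) (huw : (u, w) ∈ τ.E) :
    0 < Ttest i0 i1 τ u w := by
  rw [Ttest_eq]
  apply Finset.prod_pos
  intro v _
  by_cases hv : v = w <;> by_cases he : (u, v) ∈ τ.E
  · subst hv
    rw [Finset.sum_congr rfl (fun i _ => by rw [if_pos rfl, if_pos he])]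
    rw [sum_ccf_bbf i0 i1 h01]
    norm_num
  · exact absurd huw (hv ▸ he)
  · rw [Finset.sum_congr rfl (fun i _ => by rw [if_neg hv, if_pos he, one_mul])]
    rw [sum_bbf]
    positivity
  · rw [Finset.sum_congr rfl (fun i _ => by rw [if_neg hv, if_neg he, one_mul])]
    simp
    exact_mod_cast hd

lemma Ttest_zero (h01 : i0 ≠ i1) (τ : RTree V) (u w : V) (huw : (u, w) ∉ τ.E) :
    Ttest i0 i1 τ u w = 0 := by
  rw [Ttest_eq]
  apply Finset.prod_eq_zero (Finset.mem_univ w)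
  rw [Finset.sum_congr rfl (fun i _ => by rw [if_pos rfl, if_neg huw, mul_one])]
  exact sum_ccf i0 i1 h01

end EdgeTest

lemma key {V : Type} [Fintype V] [DecidableEq V] {d : ℕ} (hd : 2 ≤ d)
    (τ₁ τ₂ : RTree V) (lam : ℝ)
    (h : ∀ (f : V → SmoothMapD d) (x : Fin d → ℝ) (j : Fin d),
      lam * Fel d τ₁ f x j = Fel d τ₂ f x j) :
    lam = 1 ∧ τ₁ = τ₂ := by
  have hd0 : 0 < d := by omega
  obtain ⟨i0, i1, h01⟩ : ∃ i0 i1 : Fin d, i0 ≠ i1 :=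
    ⟨⟨0, by omega⟩, ⟨1, by omega⟩, by simp⟩
  have hsum : ∀ (c b : V → Fin d → ℝ),
      lam * (∑ j, Fel d τ₁ (mkf c b) 0 j) = ∑ j, Fel d τ₂ (mkf c b) 0 j := by
    intro c b
    rw [Finset.mul_sum]
    exact Finset.sum_congr rfl fun j _ => h _ _ j
  have hlam : lam = 1 := by
    have h1 := hsum (fun _ _ => 1) (fun _ _ => 1)
    rw [sum_Fel_ones, sum_Fel_ones] at h1
    have hne : ((d:ℝ) ^ Fintype.card V) ≠ 0 := by
      apply pow_ne_zero
      exact_mod_cast hd0.ne'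
    exact mul_right_cancel₀ hne (h1.trans (one_mul _).symm)
  refine ⟨hlam, ?_⟩
  subst hlam
  simp only [one_mul] at hsum
  have hE : τ₁.E = τ₂.E := by
    ext p
    obtain ⟨u, w⟩ := p
    have hT : Ttest i0 i1 τ₁ u w = Ttest i0 i1 τ₂ u w := by
      unfold Ttest
      exact hsum _ _
    constructor
    · intro h1
      by_contra h2
      have hz := Ttest_zero i0 i1 h01 τ₂ u w h2
      have hp := Ttest_pos i0 i1 h01 hd0 τ₁ u w h1
      rw [hT, hz] at hp
      exact lt_irrefl 0 hp
    · intro h1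
      by_contra h2
      have hz := Ttest_zero i0 i1 h01 τ₁ u w h2
      have hp := Ttest_pos i0 i1 h01 hd0 τ₂ u w h1
      rw [← hT, hz] at hp
      exact lt_irrefl 0 hp
  have hroot : τ₁.root = τ₂.root := by
    by_contra hr
    obtain ⟨u, hu, -⟩ := τ₁.parent_unique τ₂.root (fun hc => hr hc.symm)
    exact τ₂.root_no_parent u (hE ▸ hu)
  obtain ⟨E₁, r₁, p₁, q₁, s₁⟩ := τ₁
  obtain ⟨E₂, r₂, p₂, q₂, s₂⟩ := τ₂
  simp only at hE hroot
  subst hE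
  subst hroot
  rfl

/-- In dimension `d ≥ 2`, if `λ • F(τ₁) = F(τ₂)` on all smooth inputs then `λ = 1` and
`τ₁ = τ₂`; in particular `F : RT(n) → W_d(n)` is injective. -/
theorem elemDiff_injective (d n : ℕ) (hd : 2 ≤ d) (hn : 1 ≤ n)
    (τ₁ τ₂ : RTree (Fin n)) (lam : ℝ)
    (h : ∀ (f : Fin n → SmoothMapD d) (x : Fin d → ℝ) (j : Fin d),
      lam * Fel d τ₁ f x j = Fel d τ₂ f x j) :
    lam = 1 ∧ τ₁ = τ₂ ∧ Function.Injective (fun τ : RTree (Fin n) => Fel d τ) := by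
  obtain ⟨h1, h2⟩ := key hd τ₁ τ₂ lam h
  refine ⟨h1, h2, ?_⟩
  intro a b hab
  simp only at hab
  refine (key hd a b 1 (fun f x j => ?_)).2
  rw [one_mul, hab]
end

section
/- Let τ = ([n], E) be a rooted tree and σ a bijection of [n] such that σ.τ is again a rooted tree. If F(τ) = F(σ.τ) as multilinear maps C_2^n → C_2, then σ(C_v) = C_v for every vertex v of τ; consequently E_σ = E, i.e. σ.τ = τ. Hence F(σ.τ) = F(τ) if and only if σ.τ = τ. -/
open Finset

/-! ### Auxiliary material -/

noncomputable def Mf (c : ℝ) (a b : ℕ) : (Fin 2 → ℝ) → ℝ :=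
  fun y => c * (y 0 ^ a * y 1 ^ b)

lemma Mf_contDiff (c : ℝ) (a b : ℕ) (k : ℕ) : ContDiff ℝ k (Mf c a b) := by
  exact contDiff_const.mul (((((ContinuousLinearMap.proj 0 : (Fin 2 → ℝ) →L[ℝ] ℝ).contDiff).pow a).mul
    (((ContinuousLinearMap.proj 1 : (Fin 2 → ℝ) →L[ℝ] ℝ).contDiff).pow b)))

lemma hasFDerivAt_Mf (c : ℝ) (a b : ℕ) (y : Fin 2 → ℝ) :
    HasFDerivAt (Mf c a b)
      (c • ((y 0 ^ a) • ((↑b * y 1 ^ (b - 1)) • (ContinuousLinearMap.proj 1 : (Fin 2 → ℝ) →L[ℝ] ℝ))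
        + (y 1 ^ b) • ((↑a * y 0 ^ (a - 1)) • (ContinuousLinearMap.proj 0 : (Fin 2 → ℝ) →L[ℝ] ℝ)))) y := by
  have h0 : HasFDerivAt (fun y : Fin 2 → ℝ => y 0)
      (ContinuousLinearMap.proj 0 : (Fin 2 → ℝ) →L[ℝ] ℝ) y :=
    (ContinuousLinearMap.proj 0 : (Fin 2 → ℝ) →L[ℝ] ℝ).hasFDerivAt
  have h1 : HasFDerivAt (fun y : Fin 2 → ℝ => y 1)
      (ContinuousLinearMap.proj 1 : (Fin 2 → ℝ) →L[ℝ] ℝ) y :=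
    (ContinuousLinearMap.proj 1 : (Fin 2 → ℝ) →L[ℝ] ℝ).hasFDerivAt
  have hp0 : HasFDerivAt (fun y : Fin 2 → ℝ => y 0 ^ a)
      ((↑a * y 0 ^ (a - 1)) • (ContinuousLinearMap.proj 0 : (Fin 2 → ℝ) →L[ℝ] ℝ)) y :=
    (hasDerivAt_pow a (y 0)).comp_hasFDerivAt y h0
  have hp1 : HasFDerivAt (fun y : Fin 2 → ℝ => y 1 ^ b)
      ((↑b * y 1 ^ (b - 1)) • (ContinuousLinearMap.proj 1 : (Fin 2 → ℝ) →L[ℝ] ℝ)) y :=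
    (hasDerivAt_pow b (y 1)).comp_hasFDerivAt y h1
  exact (hp0.mul hp1).const_mul c

lemma pd_Mf_zero (c : ℝ) (a b : ℕ) : pd 0 (Mf c a b) = Mf (c * a) (a - 1) b := by
  funext y
  unfold pd
  rw [(hasFDerivAt_Mf c a b y).fderiv]
  simp [Mf, Pi.single_apply]
  ring

lemma pd_Mf_one (c : ℝ) (a b : ℕ) : pd 1 (Mf c a b) = Mf (c * b) a (b - 1) := by
  funext y
  unfold pd
  rw [(hasFDerivAt_Mf c a b y).fderiv]
  simp [Mf, Pi.single_apply]
  ring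

lemma pdList_Mf (L : List (Fin 2)) (c : ℝ) (a b : ℕ) :
    ∃ c' : ℝ, pdList L (Mf c a b) = Mf c' (a - L.count 0) (b - L.count 1) ∧
      (c' = 0 ↔ c = 0 ∨ a < L.count 0 ∨ b < L.count 1) := by
  induction L with
  | nil => exact ⟨c, rfl, by simp⟩
  | cons d L ih =>
    obtain ⟨c', h1, h2⟩ := ih
    have hpd : pdList (d :: L) (Mf c a b) = pd d (pdList L (Mf c a b)) := rfl
    rcases (by decide : ∀ t : Fin 2, t = 0 ∨ t = 1) d with rfl | rfl
    · refine ⟨c' * ↑(a - L.count 0), ?_, ?_⟩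
      · have ea : a - List.count 0 ((0:Fin 2)::L) = a - List.count 0 L - 1 := by
          simp [List.count_cons]; try omega
        have eb : b - List.count 1 ((0:Fin 2)::L) = b - List.count 1 L := by
          simp [List.count_cons]
        rw [hpd, h1, pd_Mf_zero, ea, eb]
      · rw [mul_eq_zero, h2, Nat.cast_eq_zero, Nat.sub_eq_zero_iff_le]
        simp only [List.count_cons]
        by_cases hc : c = 0 <;> simp [hc] <;> omega
    · refine ⟨c' * ↑(b - L.count 1), ?_, ?_⟩
      · have ea : a - List.count 0 ((1:Fin 2)::L) = a - List.count 0 L := by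
          simp [List.count_cons]
        have eb : b - List.count 1 ((1:Fin 2)::L) = b - List.count 1 L - 1 := by
          simp [List.count_cons]; try omega
        rw [hpd, h1, pd_Mf_one, ea, eb]
      · rw [mul_eq_zero, h2, Nat.cast_eq_zero, Nat.sub_eq_zero_iff_le]
        simp only [List.count_cons]
        by_cases hc : c = 0 <;> simp [hc] <;> omega

lemma Mf_eval0 (c : ℝ) (a b : ℕ) :
    Mf c a b (fun _ => 0) = if a = 0 ∧ b = 0 then c else 0 := by
  rcases a with _ | a <;> rcases b with _ | b <;> simp [Mf, zero_pow]

lemma pdList_Mf_eval_ne (L : List (Fin 2)) (c : ℝ) (a b : ℕ) :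
    pdList L (Mf c a b) (fun _ => 0) ≠ 0 ↔
      (c ≠ 0 ∧ L.count 0 = a ∧ L.count 1 = b) := by
  obtain ⟨c', h1, h2⟩ := pdList_Mf L c a b
  rw [h1, Mf_eval0]
  by_cases hc : c = 0
  · simp [hc] at h2 ⊢
    simp [h2]
  · split_ifs with h
    · rw [Ne, h2]
      simp [hc]
      omega
    · simp
      intro _
      omega

lemma pdList_Mf_eval_zero (L : List (Fin 2)) (a b : ℕ) :
    pdList L (Mf 0 a b) (fun _ => 0) = 0 := by
  obtain ⟨c', h1, h2⟩ := pdList_Mf L 0 a b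
  rw [h1, Mf_eval0, h2.mpr (Or.inl rfl)]
  simp

lemma count_one_map {n : ℕ} (w : Fin n) (l : List (Fin n)) (hnd : l.Nodup) :
    (l.map (fun v => if v = w then (1:Fin 2) else 0)).count 1 = if w ∈ l then 1 else 0 := by
  induction l with
  | nil => simp
  | cons a l ih =>
    simp only [List.map_cons, List.count_cons, List.nodup_cons] at *
    obtain ⟨ha, hl⟩ := hnd
    by_cases haw : a = w
    · subst haw
      simp [ih hl, ha]
    · have : ¬ (w = a) := fun h => haw h.symm
      simp [haw, ih hl, this]

lemma count_zero_add_count_one (l : List (Fin 2)) : l.count 0 + l.count 1 = l.length := by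
  induction l with
  | nil => simp
  | cons a l ih =>
    rcases (by decide : ∀ t : Fin 2, t = 0 ∨ t = 1) a with rfl | rfl <;>
      simp [List.count_cons] <;> omega

lemma cnt1 {n : ℕ} (w : Fin n) (s : Finset (Fin n)) :
    (s.toList.map (fun v => if v = w then (1:Fin 2) else 0)).count 1 =
      if w ∈ s then 1 else 0 := by
  rw [count_one_map w s.toList s.nodup_toList]
  simp [Finset.mem_toList]

lemma cnt0 {n : ℕ} (w : Fin n) (s : Finset (Fin n)) :
    (s.toList.map (fun v => if v = w then (1:Fin 2) else 0)).count 0 =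
      s.card - (if w ∈ s then 1 else 0) := by
  have h := count_zero_add_count_one (s.toList.map (fun v => if v = w then (1:Fin 2) else 0))
  rw [List.length_map, Finset.length_toList, cnt1] at h
  omega

lemma mem_children {V : Type} [Fintype V] [DecidableEq V] (τ : RTree V) (v x : V) :
    x ∈ τ.children v ↔ (v, x) ∈ τ.E := by
  simp [RTree.children]

lemma no_self_loop {V : Type} [Fintype V] [DecidableEq V] (υ : RTree V) (v : V) :
    (v, v) ∉ υ.E := by
  intro hvv
  have hvr : v ≠ υ.root := by
    intro h
    exact υ.root_no_parent v (by rw [← h]; exact hvv)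
  have key : ∀ x, Relation.ReflTransGen (fun a b : V => (b, a) ∈ υ.E) v x → x = v := by
    intro x h
    induction h with
    | refl => rfl
    | @tail b c h1 h2 ih =>
      subst ih
      obtain ⟨u, hu, huniq⟩ := υ.parent_unique b hvr
      exact (huniq c h2).trans (huniq b hvv).symm
  exact hvr (key υ.root (υ.reaches_root v)).symm

lemma elemDiff_eval {n : ℕ} (υ : RTree (Fin n)) (w : Fin n)
    (A B : Fin n → ((Fin 2 → ℝ) → ℝ))
    (hA : ∀ L, pdList L (A w) (fun _ => 0) = 0)
    (hB : ∀ v, v ≠ w → ∀ L, pdList L (B v) (fun _ => 0) = 0) :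
    elemDiff υ (fun v => fun y i => if i = 0 then A v y else B v y) (fun _ => 0) 0 =
      if υ.root = w then 0 else
        ∏ v : Fin n, pdList ((υ.children v).toList.map (fun u => if u = w then (1:Fin 2) else 0))
          (if v = w then B v else A v) (fun _ => 0) := by
  classical
  set ι : Fin n → Fin 2 := (fun u => if u = w then (1:Fin 2) else 0) with hι
  have fin2 : ∀ t : Fin 2, t ≠ 1 → t = 0 := by decide
  have fin2' : ∀ t : Fin 2, t ≠ 0 → t = 1 := by decide
  simp only [elemDiff]
  rw [Finset.sum_eq_single_of_mem ι (Finset.mem_univ ι)]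
  · by_cases hroot : υ.root = w
    · rw [if_pos hroot]
      have : ι υ.root = 1 := by simp [hι, hroot]
      rw [if_neg (by rw [this]; decide)]
    · rw [if_neg hroot]
      have : ι υ.root = 0 := by simp [hι, hroot]
      rw [if_pos this]
      refine Finset.prod_congr rfl (fun v _ => ?_)
      congr 1
      funext y
      by_cases hvw : v = w
      · simp [hι, hvw]
      · simp [hι, hvw]
  · intro idx _ hne
    obtain ⟨v₀, hv₀⟩ := Function.ne_iff.mp hne
    by_cases hroot : idx υ.root = 0
    · rw [if_pos hroot]
      apply Finset.prod_eq_zero (Finset.mem_univ v₀)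
      by_cases hvw : v₀ = w
      · subst hvw
        have h1 : ι v₀ = 1 := by simp [hι]
        have h0 : idx v₀ = 0 := fin2 _ (fun h => hv₀ (h.trans h1.symm))
        simp only [h0, if_pos rfl]
        exact hA _
      · have h1 : ι v₀ = 0 := by simp [hι, hvw]
        have h0 : idx v₀ = 1 := fin2' _ (fun h => hv₀ (h.trans h1.symm))
        simp only [h0, if_neg (by decide : ¬ ((1:Fin 2) = 0))]
        exact hB v₀ hvw _
    · rw [if_neg hroot]

lemma test_step {n : ℕ} (τ τ' : RTree (Fin n))
    (H : ∀ f : Fin n → SmoothMapD 2, Fel 2 τ f = Fel 2 τ' f)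
    {p w : Fin n} (hw : w ≠ τ.root) (hp : (p, w) ∈ τ.E) : (p, w) ∈ τ'.E := by
  classical
  have hpw : p ≠ w := by
    intro h; subst h; exact no_self_loop τ p hp
  set k : Fin n → ℕ := fun v => (τ.children v).card with hk
  set A : Fin n → ((Fin 2 → ℝ) → ℝ) :=
    fun v => if v = w then Mf 0 0 0 else if v = p then Mf 1 (k p - 1) 1 else Mf 1 (k v) 0
    with hA_def
  set B : Fin n → ((Fin 2 → ℝ) → ℝ) :=
    fun v => if v = w then Mf 1 (k w) 0 else Mf 0 0 0 with hB_def
  have hAw : A w = Mf 0 0 0 := by simp [hA_def]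
  have hAp : A p = Mf 1 (k p - 1) 1 := by simp [hA_def, hpw]
  have hAv : ∀ v, v ≠ w → v ≠ p → A v = Mf 1 (k v) 0 := by
    intro v h1 h2; simp [hA_def, h1, h2]
  have hBw : B w = Mf 1 (k w) 0 := by simp [hB_def]
  have hBv : ∀ v, v ≠ w → B v = Mf 0 0 0 := by intro v hv; simp [hB_def, hv]
  have hAzero : ∀ L, pdList L (A w) (fun _ => 0) = 0 := by
    intro L; rw [hAw]; exact pdList_Mf_eval_zero _ _ _
  have hBzero : ∀ v, v ≠ w → ∀ L, pdList L (B v) (fun _ => 0) = 0 := by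
    intro v hv L; rw [hBv v hv]; exact pdList_Mf_eval_zero _ _ _
  have hsm : ∀ v (m : ℕ), ContDiff ℝ m (fun y (i : Fin 2) => if i = 0 then A v y else B v y) := by
    intro v m
    apply contDiff_pi.mpr
    intro i
    by_cases hi : i = 0
    · have he : (fun y => if i = (0:Fin 2) then A v y else B v y) = A v := by
        funext y; rw [if_pos hi]
      rw [he]
      simp only [hA_def]
      split_ifs <;> exact Mf_contDiff _ _ _ _
    · have he : (fun y => if i = (0:Fin 2) then A v y else B v y) = B v := by
        funext y; rw [if_neg hi]
      rw [he]
      simp only [hB_def]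
      split_ifs <;> exact Mf_contDiff _ _ _ _
  set f : Fin n → SmoothMapD 2 :=
    fun v => ⟨fun y i => if i = 0 then A v y else B v y, hsm v⟩ with hf_def
  have hFel : ∀ (υ : RTree (Fin n)),
      Fel 2 υ f = elemDiff υ (fun v => fun y i => if i = 0 then A v y else B v y) := by
    intro υ; rfl
  have hHf := congrFun (congrFun (H f) (fun _ => 0)) 0
  rw [hFel τ, hFel τ', elemDiff_eval τ w A B hAzero hBzero,
    elemDiff_eval τ' w A B hAzero hBzero] at hHf
  have hτroot : ¬ (τ.root = w) := fun h => hw h.symm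
  rw [if_neg hτroot] at hHf
  have hLHS : (∏ v : Fin n,
      pdList ((τ.children v).toList.map (fun u => if u = w then (1:Fin 2) else 0))
        (if v = w then B v else A v) (fun _ => 0)) ≠ 0 := by
    rw [Finset.prod_ne_zero_iff]
    intro v _
    by_cases hvw : v = w
    · subst hvw
      rw [if_pos rfl, hBw, pdList_Mf_eval_ne]
      have hww : v ∉ τ.children v := fun h => no_self_loop τ v ((mem_children τ v v).mp h)
      refine ⟨one_ne_zero, ?_, ?_⟩
      · rw [cnt0, if_neg hww]
        try simp [hk]
      · rw [cnt1, if_neg hww]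
    · rw [if_neg hvw]
      by_cases hvp : v = p
      · subst hvp
        rw [hAp, pdList_Mf_eval_ne]
        have hwin : w ∈ τ.children v := (mem_children τ v w).mpr hp
        refine ⟨one_ne_zero, ?_, ?_⟩
        · rw [cnt0, if_pos hwin]
          try simp [hk]
        · rw [cnt1, if_pos hwin]
      · rw [hAv v hvw hvp, pdList_Mf_eval_ne]
        have hwnot : w ∉ τ.children v := by
          intro hmem
          obtain ⟨u, hu, huniq⟩ := τ.parent_unique w hw
          exact hvp ((huniq v ((mem_children τ v w).mp hmem)).trans (huniq p hp).symm)
        refine ⟨one_ne_zero, ?_, ?_⟩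
        · rw [cnt0, if_neg hwnot]
          try simp [hk]
        · rw [cnt1, if_neg hwnot]
  rw [hHf] at hLHS
  by_cases hroot' : τ'.root = w
  · rw [if_pos hroot'] at hLHS
    exact absurd rfl hLHS
  · rw [if_neg hroot'] at hLHS
    have hfac := Finset.prod_ne_zero_iff.mp hLHS p (Finset.mem_univ p)
    rw [if_neg hpw, hAp, pdList_Mf_eval_ne] at hfac
    obtain ⟨-, -, hc1⟩ := hfac
    rw [cnt1] at hc1
    by_cases hmem : w ∈ τ'.children p
    · exact (mem_children τ' p w).mp hmem
    · rw [if_neg hmem] at hc1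
      exact absurd hc1 (by norm_num)

lemma E_eq {n : ℕ} (τ τ' : RTree (Fin n)) (σ : Equiv.Perm (Fin n))
    (hE : τ'.E = τ.E.image (fun e => (e.1, σ e.2)))
    (H : ∀ f : Fin n → SmoothMapD 2, Fel 2 τ f = Fel 2 τ' f) : τ'.E = τ.E := by
  have hsub : τ.E ⊆ τ'.E := by
    intro e he
    obtain ⟨u, w⟩ := e
    have hwr : w ≠ τ.root := fun h => τ.root_no_parent u (by rwa [h] at he)
    exact test_step τ τ' H hwr he
  have hinj : Function.Injective (fun e : Fin n × Fin n => (e.1, σ e.2)) := by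
    intro e1 e2 h12
    have h12' : (e1.1, σ e1.2) = (e2.1, σ e2.2) := h12
    obtain ⟨h1, h2⟩ := Prod.ext_iff.mp h12'
    exact Prod.ext h1 (σ.injective h2)
  have hcard : τ'.E.card = τ.E.card := by
    rw [hE]; exact Finset.card_image_of_injective _ hinj
  exact (Finset.eq_of_subset_of_card_le hsub (le_of_eq hcard)).symm

/-- Proposition 3.4: let `τ` be a rooted tree and `σ` a bijection of its vertices such that
`σ.τ` (the graph with edge set `E_σ = {(v, σ w) | (v, w) ∈ E}` and root `σ r`) is again a
rooted tree.  If `F(τ) = F(σ.τ)` in dimension `2`, then `σ(C_v) = C_v` for every vertex `v`,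
whence `E_σ = E`; consequently `F(σ.τ) = F(τ)` if and only if `σ.τ = τ`. -/
theorem fixed_elemDiff_iff_fixed_tree (n : ℕ) (τ τ' : RTree (Fin n)) (σ : Equiv.Perm (Fin n))
    (hE : τ'.E = τ.E.image (fun e => (e.1, σ e.2)))
    (hr : τ'.root = σ τ.root) :
    ((∀ f : Fin n → SmoothMapD 2, Fel 2 τ f = Fel 2 τ' f) →
        ∀ v : Fin n, (τ.children v).image σ = τ.children v) ∧
    ((∀ f : Fin n → SmoothMapD 2, Fel 2 τ f = Fel 2 τ' f) ↔ τ' = τ) := by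
  have himg : ∀ v : Fin n, τ'.children v = (τ.children v).image σ := by
    intro v
    ext x
    simp only [mem_children, Finset.mem_image, hE]
    constructor
    · rintro ⟨⟨a, b⟩, hab, heq⟩
      obtain ⟨h1, h2⟩ := Prod.ext_iff.mp heq
      simp only at h1 h2
      exact ⟨b, by rwa [h1] at hab, h2⟩
    · rintro ⟨b, hb, rfl⟩
      exact ⟨(v, b), hb, rfl⟩
  constructor
  · intro H v
    have hEE := E_eq τ τ' σ hE H
    rw [← himg v]
    simp [RTree.children, hEE]
  · constructor
    · intro H
      have hEE := E_eq τ τ' σ hE H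
      have hroot : τ'.root = τ.root := by
        by_contra h
        obtain ⟨u, hu, -⟩ := τ.parent_unique τ'.root h
        exact τ'.root_no_parent u (by rw [hEE]; exact hu)
      cases τ with
      | mk E1 r1 p1 q1 s1 =>
        cases τ' with
        | mk E2 r2 p2 q2 s2 =>
          simp only at hEE hroot
          subst hEE; subst hroot
          rfl
    · intro h
      subst h
      intro f
      rfl
end

section
/- Let τ_1 = ([n], E_1) and τ_2 = ([n], E_2) be two rooted trees on the same vertex set [n] with the same multi-index, i.e. every vertex v ∈ [n] has the same number of children in τ_1 as in τ_2. Then there exists a bijection σ of [n] such that σ.τ_1 = τ_2. -/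
open Finset

/-- Proposition 3.6: if two rooted trees on `[n]` have the same multi-index (every vertex has
the same number of children in both), then there is a bijection `σ` of `[n]` with
`σ.τ₁ = τ₂`, i.e. `E₂ = {(v, σ w) | (v, w) ∈ E₁}` and `root₂ = σ root₁`. -/
theorem exists_perm_of_same_multiindex (n : ℕ) (τ₁ τ₂ : RTree (Fin n))
    (h : ∀ v : Fin n, (τ₁.children v).card = (τ₂.children v).card) :
    ∃ σ : Equiv.Perm (Fin n),
      τ₂.E = τ₁.E.image (fun e => (e.1, σ e.2)) ∧ τ₂.root = σ τ₁.root := by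
  classical
  have hmem₁ : ∀ v w : Fin n, w ∈ τ₁.children v ↔ (v, w) ∈ τ₁.E := by
    intro v w; simp [RTree.children]
  have hmem₂ : ∀ v w : Fin n, w ∈ τ₂.children v ↔ (v, w) ∈ τ₂.E := by
    intro v w; simp [RTree.children]
  -- per-vertex bijections between children sets
  let e : ∀ v : Fin n, (τ₁.children v : Finset (Fin n)) ≃ (τ₂.children v : Finset (Fin n)) :=
    fun v => Finset.equivOfCardEq (h v)
  -- parent functions
  let P₁ : Fin n → Fin n := fun v =>
    if hv : v = τ₁.root then v else (τ₁.parent_unique v hv).choose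
  let P₂ : Fin n → Fin n := fun v =>
    if hv : v = τ₂.root then v else (τ₂.parent_unique v hv).choose
  have hP₁ : ∀ v, v ≠ τ₁.root → (P₁ v, v) ∈ τ₁.E := by
    intro v hv; simp only [P₁, dif_neg hv]
    exact (τ₁.parent_unique v hv).choose_spec.1
  have hP₁u : ∀ v, v ≠ τ₁.root → ∀ u, (u, v) ∈ τ₁.E → u = P₁ v := by
    intro v hv u hu; simp only [P₁, dif_neg hv]
    exact (τ₁.parent_unique v hv).unique hu (τ₁.parent_unique v hv).choose_spec.1
  have hP₂u : ∀ v, v ≠ τ₂.root → ∀ u, (u, v) ∈ τ₂.E → u = P₂ v := by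
    intro v hv u hu; simp only [P₂, dif_neg hv]
    exact (τ₂.parent_unique v hv).unique hu (τ₂.parent_unique v hv).choose_spec.1
  -- the candidate bijection
  let f : Fin n → Fin n := fun w =>
    if hw : w = τ₁.root then τ₂.root
    else ((e (P₁ w)) ⟨w, (hmem₁ _ _).2 (hP₁ w hw)⟩ : Fin n)
  have hcast : ∀ v v' : Fin n, ∀ hvv : v = v', ∀ x : (τ₁.children v' : Finset (Fin n)),
      ((e v') x : Fin n) = (e v) ⟨(x : Fin n), hvv ▸ x.2⟩ := by
    intro v v' hvv x; subst hvv; rfl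
  have hfE : ∀ w, ∀ hw : w ≠ τ₁.root, (P₁ w, f w) ∈ τ₂.E := by
    intro w hw
    have : f w = ((e (P₁ w)) ⟨w, (hmem₁ _ _).2 (hP₁ w hw)⟩ : Fin n) := by
      simp only [f, dif_neg hw]
    rw [this]
    exact (hmem₂ _ _).1 ((e (P₁ w)) ⟨w, (hmem₁ _ _).2 (hP₁ w hw)⟩).2
  have hfne : ∀ w, w ≠ τ₁.root → f w ≠ τ₂.root := by
    intro w hw heq
    exact τ₂.root_no_parent (P₁ w) (heq ▸ hfE w hw)
  have hP₂f : ∀ w, ∀ hw : w ≠ τ₁.root, P₁ w = P₂ (f w) :=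
    fun w hw => hP₂u (f w) (hfne w hw) (P₁ w) (hfE w hw)
  -- injectivity of f
  have hinj : Function.Injective f := by
    intro w w' hww
    by_cases hw : w = τ₁.root <;> by_cases hw' : w' = τ₁.root
    · rw [hw, hw']
    · exact absurd ((by simp only [f, dif_pos hw] at hww; exact hww.symm) : f w' = τ₂.root)
        (hfne w' hw')
    · exact absurd ((by simp only [f, dif_pos hw'] at hww; exact hww) : f w = τ₂.root)
        (hfne w hw)
    · have hv : P₁ w = P₁ w' := by
        rw [hP₂f w hw, hP₂f w' hw', hww]
      simp only [f, dif_neg hw, dif_neg hw'] at hww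
      rw [hcast (P₁ w) (P₁ w') hv] at hww
      have := (e (P₁ w)).injective (Subtype.ext hww)
      exact congrArg Subtype.val this
  let σ : Equiv.Perm (Fin n) := Equiv.ofBijective f (Finite.injective_iff_bijective.mp hinj)
  have hσ : ∀ w, σ w = f w := fun w => rfl
  refine ⟨σ, ?_, ?_⟩
  · ext ⟨v, u⟩
    simp only [Finset.mem_image, Prod.mk.injEq, Prod.exists]
    constructor
    · intro hE₂
      have hu : u ∈ τ₂.children v := (hmem₂ _ _).2 hE₂
      set x := (e v).symm ⟨u, hu⟩ with hx
      have hwE : (v, (x : Fin n)) ∈ τ₁.E := (hmem₁ _ _).1 x.2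
      have hwne : (x : Fin n) ≠ τ₁.root := fun heq => τ₁.root_no_parent v (heq ▸ hwE)
      have hvP : v = P₁ (x : Fin n) := hP₁u _ hwne v hwE
      refine ⟨v, (x : Fin n), hwE, rfl, ?_⟩
      rw [hσ]
      have : f (x : Fin n) = ((e (P₁ (x : Fin n))) ⟨(x : Fin n),
          (hmem₁ _ _).2 (hP₁ _ hwne)⟩ : Fin n) := by
        simp only [f, dif_neg hwne]
      rw [this, ← hcast (P₁ (x : Fin n)) v hvP.symm ⟨(x : Fin n), x.2⟩]
      simp [hx]
    · rintro ⟨a, b, hab, rfl, rfl⟩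
      have hbne : b ≠ τ₁.root := fun heq => τ₁.root_no_parent a (heq ▸ hab)
      have haP : a = P₁ b := hP₁u b hbne a hab
      rw [hσ]
      have := hfE b hbne
      rwa [← haP] at this
  · have : f τ₁.root = τ₂.root := by simp [f]
    rw [hσ, this]
end

section
/- In dimension 1, the elementary differential map on rooted trees factorises through multi-indices: for every n ≥ 1, every τ ∈ RT(n), and all f_1,…,f_n ∈ C^∞(ℝ,ℝ), one has F(τ)(f_1,…,f_n) = G(π(τ))(f_1,…,f_n). -/
open Finset

/-- The type of smooth functions `ℝ → ℝ` (i.e. `C_1 = C^∞(ℝ, ℝ)`). -/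
def SmoothR : Type := {f : ℝ → ℝ // ∀ k : ℕ, ContDiff ℝ k f}

/-- A multi-index on `[n]`: a map `φ : [n] → ℕ` with `∑ v, φ v = n - 1`. -/
structure MultiIndex (n : ℕ) where
  φ : Fin n → ℕ
  sum_eq : ∑ v, φ v = n - 1

/-- The elementary differential `G(m)(f₁, …, fₙ) = f₁^{(φ 1)} ⋯ fₙ^{(φ n)}` of a multi-index. -/
noncomputable def Gmap {n : ℕ} (m : MultiIndex n) (f : Fin n → SmoothR) : ℝ → ℝ :=
  fun t => ∏ v, iteratedDeriv (m.φ v) ((f v).1) t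
/-- The smooth function `ℝ → ℝ` induced by a smooth map `ℝ^1 → ℝ^1`. -/
noncomputable def toC1 (f : SmoothMapD 1) : SmoothR :=
  ⟨fun t => f.1 (fun _ => t) 0, fun k => by
    have h1 : ContDiff ℝ (k : ℕ) (fun t : ℝ => (fun _ : Fin 1 => t)) :=
      contDiff_pi.mpr fun _ => contDiff_id
    exact (contDiff_pi.mp (f.2 k) 0).comp h1⟩

/-! In dimension one every index function `idx : V → Fin 1` is constant, so the sum defining
`elemDiff` has a single term, and a partial derivative `∂_0` taken along the diagonal
`t ↦ (fun _ => t)` is an ordinary derivative. Hence the factor of a vertex `v` is the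
`|children v|`-th derivative of `f_v`, which is exactly the factor of `π(τ)` in `G`. -/

lemma contDiff_pd {d : ℕ} (i : Fin d) {g : (Fin d → ℝ) → ℝ} (hg : ∀ k : ℕ, ContDiff ℝ k g)
    (k : ℕ) : ContDiff ℝ k (pd i g) :=
  ((hg (k + 1)).fderiv_right (by push_cast; exact le_rfl)).clm_apply contDiff_const

lemma contDiff_pdList {d : ℕ} (l : List (Fin d)) {g : (Fin d → ℝ) → ℝ}
    (hg : ∀ k : ℕ, ContDiff ℝ k g) (k : ℕ) : ContDiff ℝ k (pdList l g) := by
  induction l generalizing k with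
  | nil => exact hg k
  | cons i l ih => exact contDiff_pd i ih k

lemma pd_apply_const {g : (Fin 1 → ℝ) → ℝ} (hg : Differentiable ℝ g) (i : Fin 1) (t : ℝ) :
    pd i g (fun _ => t) = deriv (fun s => g fun _ => s) t := by
  have hsingle : (Pi.single i 1 : Fin 1 → ℝ) = fun _ => 1 := funext fun k => by
    rw [Subsingleton.elim k i, Pi.single_eq_same]
  have hdiag : HasDerivAt (fun s : ℝ => fun _ : Fin 1 => s) (fun _ => 1) t :=
    hasDerivAt_pi.2 fun _ => hasDerivAt_id t
  rw [pd, hsingle]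
  exact ((hg _).hasFDerivAt.comp_hasDerivAt t hdiag).deriv.symm

lemma pdList_comp_const (l : List (Fin 1)) {g : (Fin 1 → ℝ) → ℝ}
    (hg : ∀ k : ℕ, ContDiff ℝ k g) :
    (fun t => pdList l g fun _ => t) = iteratedDeriv l.length (fun t => g fun _ => t) := by
  induction l with
  | nil => exact iteratedDeriv_zero.symm
  | cons i l ih =>
    funext t
    have hdiff : Differentiable ℝ (pdList l g) :=
      (contDiff_pdList l hg 1).differentiable one_ne_zero
    rw [List.length_cons, iteratedDeriv_succ, ← ih]
    exact pd_apply_const hdiff i t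

lemma elemDiff_fin_one {V : Type} [Fintype V] [DecidableEq V] (τ : RTree V)
    {f : V → (Fin 1 → ℝ) → (Fin 1 → ℝ)} (hf : ∀ v, ∀ k : ℕ, ContDiff ℝ k (f v))
    (x : Fin 1 → ℝ) (j : Fin 1) :
    elemDiff τ f x j =
      ∏ v, iteratedDeriv (τ.children v).card (fun t => f v (fun _ => t) 0) (x 0) := by
  have hx : x = fun _ => x 0 := funext fun k => by rw [Subsingleton.elim k 0]
  rw [elemDiff, Fintype.sum_unique, if_pos (Subsingleton.elim _ _)]
  refine Finset.prod_congr rfl fun v _ => ?_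
  have hg (k : ℕ) : ContDiff ℝ k fun y => f v y 0 := contDiff_pi.mp (hf v k) 0
  rw [hx, ← Finset.length_toList, ← List.length_map (f := (default : V → Fin 1)),
    ← pdList_comp_const _ hg]
  rfl

theorem elemDiff_factorises_through_multiindices_general (n : ℕ)
    (τ : RTree (Fin n)) (m : MultiIndex n)
    (hm : ∀ v : Fin n, m.φ v = (τ.children v).card)
    (f : Fin n → SmoothMapD 1) (x : Fin 1 → ℝ) (j : Fin 1) :
    Fel 1 τ f x j = Gmap m (fun v => toC1 (f v)) (x 0) := by
  rw [Fel, elemDiff_fin_one τ (fun v => (f v).2)]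
  simp only [Gmap, hm]
  rfl

/-- Proposition 2.5: in dimension `1`, the elementary differential factorises through
multi-indices: `F(τ) = G(π(τ))`, where `π(τ)` is the multi-index recording the number of
children of each vertex. -/
theorem elemDiff_factorises_through_multiindices (n : ℕ) (hn : 1 ≤ n)
    (τ : RTree (Fin n)) (m : MultiIndex n)
    (hm : ∀ v : Fin n, m.φ v = (τ.children v).card)
    (f : Fin n → SmoothMapD 1) (x : Fin 1 → ℝ) (j : Fin 1) :
    Fel 1 τ f x j = Gmap m (fun v => toC1 (f v)) (x 0) :=
  elemDiff_factorises_through_multiindices_general n τ m hm f x j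
end

section
/- For every n ≥ 1 there exists d ≥ 1 such that the family (F(τ))_{τ ∈ RT(n)} is linearly independent over ℝ: if τ_1,…,τ_m ∈ RT(n) are pairwise distinct and λ_1,…,λ_m ∈ ℝ satisfy Σ_i λ_i F(τ_i)(f^1,…,f^n) = 0 for all f^1,…,f^n ∈ C_d, then λ_i = 0 for all i. -/
open Finset

noncomputable def mon {d : ℕ} (S : Finset (Fin d)) : (Fin d → ℝ) → ℝ :=
  fun x => ∏ c ∈ S, x c

lemma mon_contDiff {d : ℕ} (S : Finset (Fin d)) (k : ℕ) : ContDiff ℝ k (mon S) := by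
  have : ContDiff ℝ (k:ℕ∞) (fun x : Fin d → ℝ => ∏ c ∈ S, x c) :=
    contDiff_prod fun i _ => (ContinuousLinearMap.proj i : (Fin d → ℝ) →L[ℝ] ℝ).contDiff
  exact this

lemma hasFDerivAt_mon {d : ℕ} (S : Finset (Fin d)) (x : Fin d → ℝ) :
    HasFDerivAt (mon S)
      (∑ c ∈ S, (∏ j ∈ S.erase c, x j) • (ContinuousLinearMap.proj c : (Fin d → ℝ) →L[ℝ] ℝ)) x := by
  have := HasFDerivAt.finset_prod (u := S)
    (g := fun c (y : Fin d → ℝ) => y c)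
    (g' := fun c => (ContinuousLinearMap.proj c : (Fin d → ℝ) →L[ℝ] ℝ))
    (x := x) (fun i _ => (ContinuousLinearMap.proj i : (Fin d → ℝ) →L[ℝ] ℝ).hasFDerivAt)
  exact this

lemma pd_mon {d : ℕ} (i : Fin d) (S : Finset (Fin d)) :
    pd i (mon S) = if i ∈ S then mon (S.erase i) else (fun _ => 0) := by
  funext x
  have h := (hasFDerivAt_mon S x).fderiv
  simp only [pd, h, ContinuousLinearMap.coe_sum', Finset.sum_apply,
    ContinuousLinearMap.coe_smul', Pi.smul_apply, ContinuousLinearMap.proj_apply,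
    smul_eq_mul]
  have : ∀ c ∈ S, (∏ j ∈ S.erase c, x j) * (Pi.single i (1:ℝ) : Fin d → ℝ) c
      = if c = i then ∏ j ∈ S.erase i, x j else 0 := by
    intro c _
    by_cases hc : c = i
    · subst hc; simp
    · simp [Pi.single_apply, hc]
  rw [Finset.sum_congr rfl this, Finset.sum_ite_eq' S i]
  by_cases hi : i ∈ S <;> simp [hi, mon]

lemma pd_zero {d : ℕ} (i : Fin d) : pd i (fun _ => (0:ℝ)) = fun _ => 0 := by
  funext x
  simp [pd, fderiv_const]

lemma pdList_zero {d : ℕ} (L : List (Fin d)) : pdList L (fun _ => (0:ℝ)) = fun _ => 0 := by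
  induction L with
  | nil => rfl
  | cons a L ih =>
      show pd a (pdList L fun _ => 0) = _
      rw [ih, pd_zero]

lemma pdList_mon {d : ℕ} (L : List (Fin d)) (hL : L.Nodup) (S : Finset (Fin d)) :
    pdList L (mon S) = if L.toFinset ⊆ S then mon (S \ L.toFinset) else (fun _ => 0) := by
  induction L with
  | nil => simp [pdList, mon]
  | cons a L ih =>
      have haL : a ∉ L := (List.nodup_cons.1 hL).1
      have hnd : L.Nodup := (List.nodup_cons.1 hL).2
      show pd a (pdList L (mon S)) = _
      rw [ih hnd]
      by_cases hsub : L.toFinset ⊆ S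
      · simp only [hsub, if_true, pd_mon]
        by_cases ha : a ∈ S
        · have ha' : a ∈ S \ L.toFinset :=
            Finset.mem_sdiff.2 ⟨ha, fun h => haL (List.mem_toFinset.1 h)⟩
          have hsub' : (a :: L).toFinset ⊆ S := by
            intro x hx
            rcases List.mem_toFinset.1 hx with h
            rcases List.mem_cons.1 h with h | h
            · subst h; exact ha
            · exact hsub (List.mem_toFinset.2 h)
          rw [if_pos ha', if_pos hsub']
          have hfs : (S \ L.toFinset).erase a = S \ (a :: L).toFinset := by
            ext x
            simp only [Finset.mem_erase, Finset.mem_sdiff, List.toFinset_cons,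
              Finset.mem_insert, List.mem_toFinset]
            constructor
            · rintro ⟨hxa, hxS, hxL⟩; exact ⟨hxS, by tauto⟩
            · rintro ⟨hxS, h⟩
              push_neg at h
              exact ⟨h.1, hxS, h.2⟩
          rw [hfs]
        · have ha' : a ∉ S \ L.toFinset := fun h => ha (Finset.mem_sdiff.1 h).1
          have hsub' : ¬ (a :: L).toFinset ⊆ S := fun h =>
            ha (h (by simp))
          rw [if_neg ha', if_neg hsub']
      · have hsub' : ¬ (a :: L).toFinset ⊆ S := fun h =>
          hsub (fun x hx => h (by simp [List.mem_toFinset.1 hx]))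
        rw [if_neg hsub, if_neg hsub', pd_zero]

lemma mon_zero {d : ℕ} (S : Finset (Fin d)) : mon S (fun _ => 0) = if S = ∅ then 1 else 0 := by
  by_cases h : S = ∅
  · simp [h, mon]
  · obtain ⟨a, ha⟩ := Finset.nonempty_iff_ne_empty.2 h
    simp [mon, h, Finset.prod_eq_zero ha]

lemma RTree.eq_of {n : ℕ} (τ σ : RTree (Fin n)) (hroot : τ.root = σ.root)
    (hE : τ.E = σ.E) : τ = σ := by
  cases τ; cases σ; simp_all

lemma RTree.eq_of_children {n : ℕ} (τ σ : RTree (Fin n)) (hroot : τ.root = σ.root)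
    (hc : ∀ v, τ.children v = σ.children v) : τ = σ := by
  refine RTree.eq_of τ σ hroot ?_
  ext ⟨u, w⟩
  have := hc u
  simp only [RTree.children, Finset.ext_iff, Finset.mem_filter, Finset.mem_univ,
    true_and] at this
  exact this w

/-- For every `n ≥ 1` there is a dimension `d` in which the elementary differentials of the
rooted trees on `[n]` are linearly independent. -/
theorem exists_dim_elemDiff_linearIndependent (n : ℕ) (hn : 1 ≤ n) :
    ∃ d : ℕ, 1 ≤ d ∧
      ∀ (s : Finset (RTree (Fin n))) (lam : RTree (Fin n) → ℝ),
        (∀ (f : Fin n → SmoothMapD d) (x : Fin d → ℝ) (j : Fin d),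
          ∑ τ ∈ s, lam τ * Fel d τ f x j = 0) →
        ∀ τ ∈ s, lam τ = 0 := by
  classical
  refine ⟨n, hn, ?_⟩
  intro s lam H σ hσ
  have hsm : ∀ v : Fin n, ∀ k : ℕ, ContDiff ℝ k
      (fun (x : Fin n → ℝ) (j : Fin n) => if j = v then mon (σ.children v) x else 0) := by
    intro v k
    apply contDiff_pi.2
    intro j
    by_cases h : j = v
    · simpa [h] using mon_contDiff (σ.children v) k
    · simp only [h, if_false]
      exact contDiff_const
  set f : Fin n → SmoothMapD n := fun v =>
    ⟨fun x j => if j = v then mon (σ.children v) x else 0, hsm v⟩ with hf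
  have factor : ∀ τ : RTree (Fin n), ∀ v : Fin n,
      pdList ((τ.children v).toList.map id) (fun y => (f v).1 y (id v)) (fun _ => 0)
        = if τ.children v = σ.children v then 1 else 0 := by
    intro τ v
    have h1 : (fun y => (f v).1 y (id v)) = mon (σ.children v) := by
      funext y; simp [hf]
    rw [List.map_id, h1, pdList_mon _ (Finset.nodup_toList _)]
    rw [Finset.toList_toFinset]
    by_cases heq : τ.children v = σ.children v
    · rw [if_pos heq, if_pos (show τ.children v ⊆ σ.children v by rw [heq]), heq, mon_zero]
      simp
    · by_cases hsub : τ.children v ⊆ σ.children v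
      · rw [if_pos hsub, if_neg heq, mon_zero]
        have : σ.children v \ τ.children v ≠ ∅ := by
          intro h
          exact heq (Finset.Subset.antisymm hsub (Finset.sdiff_eq_empty_iff_subset.1 h))
        rw [if_neg this]
      · rw [if_neg hsub, if_neg heq]
  have key : ∀ τ : RTree (Fin n),
      Fel n τ f (fun _ => 0) σ.root = if τ = σ then 1 else 0 := by
    intro τ
    have hsum : Fel n τ f (fun _ => 0) σ.root =
        ∑ idx : Fin n → Fin n,
          if idx τ.root = σ.root then
            ∏ v : Fin n, pdList ((τ.children v).toList.map idx)
              (fun y => (f v).1 y (idx v)) (fun _ => 0)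
          else 0 := rfl
    rw [hsum]
    rw [Finset.sum_eq_single_of_mem id (Finset.mem_univ id)]
    · by_cases hroot : τ.root = σ.root
      · rw [if_pos (show id τ.root = σ.root from hroot),
          Finset.prod_congr rfl (fun v _ => factor τ v), Finset.prod_boole]
        by_cases hch : ∀ v ∈ (Finset.univ : Finset (Fin n)), τ.children v = σ.children v
        · rw [if_pos hch,
            if_pos (RTree.eq_of_children τ σ hroot (fun v => hch v (Finset.mem_univ v)))]
        · rw [if_neg hch, if_neg]
          intro h
          subst h
          exact hch (fun v _ => rfl)
      · rw [if_neg (show ¬ id τ.root = σ.root from hroot), if_neg]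
        intro h
        subst h
        exact hroot rfl
    · intro idx _ hidx
      by_cases hroot : idx τ.root = σ.root
      · rw [if_pos hroot]
        obtain ⟨v, hv⟩ : ∃ v, idx v ≠ v := by
          by_contra h
          push_neg at h
          exact hidx (funext h)
        apply Finset.prod_eq_zero (Finset.mem_univ v)
        have h0 : (fun y => (f v).1 y (idx v)) = fun _ => (0:ℝ) := by
          funext y; simp [hf, hv]
        rw [h0, pdList_zero]
      · rw [if_neg hroot]
  have hH := H f (fun _ => 0) σ.root
  have : ∑ τ ∈ s, lam τ * Fel n τ f (fun _ => 0) σ.root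
      = ∑ τ ∈ s, if τ = σ then lam τ else 0 := by
    apply Finset.sum_congr rfl
    intro τ _
    rw [key τ]
    by_cases h : τ = σ <;> simp [h]
  rw [this, Finset.sum_ite_eq' s σ, if_pos hσ] at hH
  exact hH
end

section
/- For every n ≥ 1, the family (G(m))_{m ∈ MI(n)} is linearly independent over ℝ: if m_1,…,m_k ∈ MI(n) are pairwise distinct and λ_1,…,λ_k ∈ ℝ satisfy Σ_i λ_i G(m_i)(f_1,…,f_n) = 0 for all f_1,…,f_n ∈ C^∞(ℝ,ℝ), then λ_i = 0 for all i. -/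
open Finset

lemma MultiIndex.ext' {n : ℕ} {m₁ m₂ : MultiIndex n} (h : m₁.φ = m₂.φ) : m₁ = m₂ := by
  cases m₁; cases m₂; simp_all

lemma iteratedDeriv_exp_mul (a : ℝ) (k : ℕ) :
    iteratedDeriv k (fun t => Real.exp (a * t)) = fun t => a ^ k * Real.exp (a * t) := by
  induction k with
  | zero => simp
  | succ k ih =>
    rw [iteratedDeriv_succ, ih]
    funext t
    have h1 : HasDerivAt (fun t : ℝ => a * t) a t := by
      simpa using (hasDerivAt_id t).const_mul a
    have h2 : HasDerivAt (fun t : ℝ => Real.exp (a * t)) (Real.exp (a * t) * a) t :=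
      (Real.hasDerivAt_exp (a * t)).comp t h1
    have h3 := (h2.const_mul (a ^ k)).deriv
    rw [h3]; ring

lemma smooth_exp_mul (a : ℝ) (k : ℕ) : ContDiff ℝ k (fun t : ℝ => Real.exp (a * t)) :=
  (Real.contDiff_exp.comp (contDiff_const.mul contDiff_id)).of_le le_top

/-- The elementary differentials of pairwise distinct multi-indices are linearly
independent. -/
theorem multiindex_elemDiff_linearIndependent (n : ℕ) (hn : 1 ≤ n)
    (s : Finset (MultiIndex n)) (lam : MultiIndex n → ℝ)
    (h : ∀ (f : Fin n → SmoothR) (t : ℝ), ∑ m ∈ s, lam m * Gmap m f t = 0) :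
    ∀ m ∈ s, lam m = 0 := by
  intro m0 hm0
  have key : ∀ a : Fin n → ℝ, ∑ m ∈ s, lam m * ∏ v, (a v) ^ (m.φ v) = 0 := by
    intro a
    have := h (fun v => ⟨fun t => Real.exp (a v * t), fun k => smooth_exp_mul (a v) k⟩) 0
    simpa [Gmap, iteratedDeriv_exp_mul, Real.exp_zero] using this
  set d : MultiIndex n → (Fin n →₀ ℕ) := fun m => Finsupp.equivFunOnFinite.symm m.φ with hd
  have hdinj : ∀ m₁ m₂ : MultiIndex n, d m₁ = d m₂ → m₁ = m₂ := by
    intro m₁ m₂ hde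
    exact MultiIndex.ext' (Finsupp.equivFunOnFinite.symm.injective hde)
  set P : MvPolynomial (Fin n) ℝ := ∑ m ∈ s, MvPolynomial.monomial (d m) (lam m) with hPdef
  have hP : P = 0 := by
    apply MvPolynomial.funext
    intro a
    rw [hPdef]
    simp only [map_sum, MvPolynomial.eval_monomial, map_zero]
    have : ∀ m : MultiIndex n, (d m).prod (fun i e => a i ^ e) = ∏ v, (a v) ^ (m.φ v) := by
      intro m
      rw [Finsupp.prod_fintype]
      · simp [hd]
      · intro i; simp
    simp only [this]
    exact key a
  have hc := congrArg (MvPolynomial.coeff (d m0)) hP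
  rw [hPdef] at hc
  simp only [MvPolynomial.coeff_sum, MvPolynomial.coeff_monomial, MvPolynomial.coeff_zero] at hc
  rw [Finset.sum_eq_single m0] at hc
  · simpa using hc
  · intro m hm hne
    rw [if_neg]
    intro hde
    exact hne (hdinj m m0 hde)
  · intro hm; exact absurd hm0 hm
end

section
/- For every d ≥ 1 and every m ≤ 2d, the Witt algebra W_d satisfies no left identity of arity m: if (λ_σ)_{σ ∈ S_m} are real numbers such that Σ_{σ ∈ S_m} λ_σ · f_{σ(1)} ◁ (f_{σ(2)} ◁ ( ⋯ (f_{σ(m−1)} ◁ f_{σ(m)}) ⋯ )) = 0 for all polynomial maps f_1,…,f_m : ℝ^d → ℝ^d, then λ_σ = 0 for every σ ∈ S_m. -/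
open Finset

/-- The pre-Lie product `f ◁ g = ∑ i, g_i ∂_i f` on maps `ℝ^d → ℝ^d`. -/
noncomputable def tri {d : ℕ} (f g : (Fin d → ℝ) → (Fin d → ℝ)) :
    (Fin d → ℝ) → (Fin d → ℝ) :=
  fun x j => ∑ i : Fin d, g x i * fderiv ℝ (fun y => f y j) x (Pi.single i 1)
/-- The polynomial map `ℝ^d → ℝ^d` associated with a `d`-tuple of polynomials; these maps
form the Witt algebra `W_d` under the product `◁`. -/
noncomputable def polyMap {d : ℕ} (P : Fin d → MvPolynomial (Fin d) ℝ) :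
    (Fin d → ℝ) → (Fin d → ℝ) :=
  fun x j => MvPolynomial.eval x (P j)

noncomputable def elemF {d : ℕ} (c : Fin d) (r : ℝ) (o : Option (Fin d)) :
    (Fin d → ℝ) → (Fin d → ℝ) :=
  fun x j => if j = c then r * (match o with | none => 1 | some i => x i) else 0

def dlt {d : ℕ} (o : Option (Fin d)) (c : Fin d) : ℝ :=
  match o with | none => 0 | some i => if i = c then 1 else 0

lemma tri_elemF {d : ℕ} (c c' : Fin d) (r r' : ℝ) (o o' : Option (Fin d)) :
    tri (elemF c r o) (elemF c' r' o') = elemF c (r * dlt o c' * r') o' := by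
  funext x j
  unfold tri elemF
  rw [Finset.sum_eq_single c']
  · by_cases hj : j = c
    · subst hj
      cases o with
      | none =>
        simp [dlt, fderiv_const]
      | some i =>
        have hdiff : DifferentiableAt ℝ (fun y : Fin d → ℝ => y i) x :=
          (ContinuousLinearMap.proj (R := ℝ) (φ := fun _ : Fin d => ℝ) i).differentiableAt
        have hf : fderiv ℝ (fun y : Fin d → ℝ => y i) x
            = ContinuousLinearMap.proj (R := ℝ) (φ := fun _ : Fin d => ℝ) i :=
          (ContinuousLinearMap.proj (R := ℝ) (φ := fun _ : Fin d => ℝ) i).fderiv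
        have hfd : fderiv ℝ (fun y : Fin d → ℝ => r * y i) x
            = r • ContinuousLinearMap.proj (R := ℝ) (φ := fun _ : Fin d => ℝ) i := by
          rw [fderiv_const_mul hdiff, hf]
        simp only [if_pos rfl]
        simp [hfd, dlt, Pi.single_apply]
        cases o' with
        | none => by_cases hic : i = c' <;> simp [hic] <;> ring
        | some i' => by_cases hic : i = c' <;> simp [hic] <;> ring
    · simp [hj]
  · intro b _ hb
    simp [if_neg hb]
  · simp

noncomputable def resF {d : ℕ} (t : Fin d × ℝ × Option (Fin d)) :
    List (Fin d × ℝ × Option (Fin d)) → Fin d × ℝ × Option (Fin d)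
  | [] => t
  | p :: l => (p.1, p.2.1 * dlt p.2.2 (resF t l).1 * (resF t l).2.1, (resF t l).2.2)

lemma foldr_tri_elemF {d : ℕ} (t : Fin d × ℝ × Option (Fin d))
    (l : List (Fin d × ℝ × Option (Fin d))) :
    (l.map (fun p => elemF p.1 p.2.1 p.2.2)).foldr tri (elemF t.1 t.2.1 t.2.2)
    = elemF (resF t l).1 (resF t l).2.1 (resF t l).2.2 := by
  induction l with
  | nil => rfl
  | cons p l ih => simp [resF, ih, tri_elemF]

lemma resF_ofFn {d : ℕ} (k : ℕ) (g : Fin (k + 1) → Fin d × ℝ × Option (Fin d))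
    (hr : ∀ v, (g v).2.1 = 1) :
    resF (g (Fin.last k)) (List.ofFn (fun i : Fin k => g i.castSucc))
    = ((g 0).1, ∏ i : Fin k, dlt (g i.castSucc).2.2 (g i.succ).1, (g (Fin.last k)).2.2) := by
  induction k with
  | zero =>
    simp only [List.ofFn_zero, resF, Finset.univ_eq_empty, Finset.prod_empty]
    rw [show (Fin.last 0) = 0 from rfl, ← hr 0]
  | succ k ih =>
    have ih' := ih (fun v => g v.succ) (fun v => hr _)
    rw [List.ofFn_succ]
    simp only [resF]
    simp only [Fin.succ_castSucc] at ih' ⊢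
    rw [show (Fin.last (k+1)) = (Fin.last k).succ from rfl]
    rw [ih']
    simp only [Fin.prod_univ_succ, hr, one_mul, Fin.castSucc_zero]

def bbF (d m : ℕ) (hm : m + 1 ≤ 2 * d) (v : Fin (m + 1)) : Fin d :=
  ⟨v.val / 2, by have := v.isLt; omega⟩

def ovF (d m : ℕ) (hm : m + 1 ≤ 2 * d) (v : Fin (m + 1)) : Option (Fin d) :=
  if h : v.val < m then some ⟨(v.val + 1) / 2, by omega⟩ else none

noncomputable def Ppoly (d m : ℕ) (hm : m + 1 ≤ 2 * d) (v : Fin (m + 1)) :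
    Fin d → MvPolynomial (Fin d) ℝ :=
  fun j => if j = bbF d m hm v then
    (match ovF d m hm v with | none => 1 | some i => MvPolynomial.X i) else 0

lemma polyMap_Ppoly (d m : ℕ) (hm : m + 1 ≤ 2 * d) (v : Fin (m + 1)) :
    polyMap (Ppoly d m hm v) = elemF (bbF d m hm v) 1 (ovF d m hm v) := by
  funext x j
  unfold polyMap Ppoly elemF
  cases ovF d m hm v with
  | none => by_cases hj : j = bbF d m hm v <;> simp [hj]
  | some i => by_cases hj : j = bbF d m hm v <;> simp [hj]

lemma elemF_ones {d : ℕ} (c : Fin d) (r : ℝ) (o : Option (Fin d)) (j : Fin d) :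
    elemF c r o (fun _ => 1) j = if j = c then r else 0 := by
  unfold elemF
  cases o <;> simp

set_option maxHeartbeats 4000000 in
lemma comb (m : ℕ) (ρ : Equiv.Perm (Fin (m + 1)))
    (h0 : (ρ 0).val / 2 = 0)
    (hc : ∀ i : Fin m, ((ρ i.castSucc).val + 1) / 2 = (ρ i.succ).val / 2) :
    ∀ v, ρ v = v := by
  have chain : ∀ j : Fin (m + 1), 0 < j.val →
      ((ρ ⟨j.val - 1, lt_of_le_of_lt (Nat.sub_le _ _) j.isLt⟩).val + 1) / 2 = (ρ j).val / 2 := by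
    intro j hj
    have hjm : j.val - 1 < m := by have := j.isLt; omega
    have h := hc ⟨j.val - 1, hjm⟩
    have e1 : (⟨j.val - 1, hjm⟩ : Fin m).castSucc = ⟨j.val - 1, lt_of_le_of_lt (Nat.sub_le _ _) j.isLt⟩ := rfl
    have e2 : (⟨j.val - 1, hjm⟩ : Fin m).succ = j := by
      apply Fin.ext; simp only [Fin.val_succ]; omega
    rw [e1, e2] at h
    exact h
  have h00 : (0 : Fin (m + 1)) = ⟨0, Nat.succ_pos m⟩ := rfl
  have key : ∀ k : ℕ, ∀ hk : k < m + 1, ρ ⟨k, hk⟩ = ⟨k, hk⟩ := by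
    intro k
    induction k using Nat.strong_induction_on with
    | _ k IH =>
    intro hk
    match k, hk with
    | 0, hk =>
      by_contra hne
      have hv0 : (ρ ⟨0, hk⟩).val ≠ 0 := by
        intro h; exact hne (by apply Fin.ext; simpa using h)
      have hv1 : (ρ ⟨0, hk⟩).val < 2 := by
        rw [h00] at h0; omega
      obtain ⟨j, hρj⟩ : ∃ j, ρ j = ⟨0, hk⟩ := ⟨ρ.symm _, ρ.apply_symm_apply _⟩
      have hj0 : 0 < j.val := by
        rcases Nat.eq_zero_or_pos j.val with h | h
        · exfalso
          have : j = ⟨0, hk⟩ := by apply Fin.ext; simpa using h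
          rw [this] at hρj
          exact hv0 (by rw [hρj])
        · exact h
      have hch := chain j hj0
      rw [hρj] at hch
      have hb : (ρ ⟨j.val - 1, lt_of_le_of_lt (Nat.sub_le _ _) j.isLt⟩).val = 0 := by
        simp only [Fin.val_mk] at hch; omega
      have : (⟨j.val - 1, lt_of_le_of_lt (Nat.sub_le _ _) j.isLt⟩ : Fin (m + 1)) = j := by
        apply ρ.injective
        rw [hρj]; apply Fin.ext; simpa using hb
      have := congrArg Fin.val this
      simp only [Fin.val_mk] at this
      omega
    | k + 1, hk =>
      have hρk : ρ ⟨k, Nat.lt_of_succ_lt hk⟩ = ⟨k, Nat.lt_of_succ_lt hk⟩ :=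
        IH k (Nat.lt_succ_self k) (Nat.lt_of_succ_lt hk)
      have hch := chain ⟨k + 1, hk⟩ (by simp)
      have e3 : (⟨k + 1 - 1, lt_of_le_of_lt (Nat.sub_le _ _) hk⟩ : Fin (m + 1))
          = ⟨k, Nat.lt_of_succ_lt hk⟩ := rfl
      rw [e3, hρk] at hch
      simp only [Fin.val_mk] at hch
      obtain ⟨a, hadef⟩ : ∃ a, (ρ ⟨k + 1, hk⟩).val = a := ⟨_, rfl⟩
      rw [hadef] at hch
      have ha1 : a < m + 1 := hadef ▸ (ρ ⟨k + 1, hk⟩).isLt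
      have hge : ∀ i : ℕ, i ≤ k → a ≠ i := by
        intro i hik hai
        have : ρ ⟨k + 1, hk⟩ = ρ ⟨i, lt_of_le_of_lt hik (Nat.lt_of_succ_lt hk)⟩ := by
          rw [IH i (Nat.lt_succ_of_le hik) (lt_of_le_of_lt hik (Nat.lt_of_succ_lt hk))]
          apply Fin.ext; simp only [Fin.val_mk]; omega
        have := congrArg Fin.val (ρ.injective this)
        simp only [Fin.val_mk] at this
        omega
      have hak : a = k + 1 ∨ a = k + 2 := by
        rcases Nat.lt_or_ge a (k + 1) with h | h
        · exact absurd rfl (hge a (by omega))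
        · omega
      rcases hak with h | h
      · apply Fin.ext; simp only [Fin.val_mk]; omega
      · exfalso
        obtain ⟨j, hρj⟩ : ∃ j, ρ j = ⟨k + 1, hk⟩ := ⟨ρ.symm _, ρ.apply_symm_apply _⟩
        have hjge : k + 1 < j.val := by
          rcases Nat.lt_or_ge (k + 1) j.val with hlt | hle
          · exact hlt
          · exfalso
            rcases Nat.lt_or_ge j.val (k + 1) with hjk | hjk
            · have h1 : ρ j = j := IH j.val hjk j.isLt
              rw [h1] at hρj
              have := congrArg Fin.val hρj
              simp only [Fin.val_mk] at this
              omega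
            · have hj : j = ⟨k + 1, hk⟩ := by apply Fin.ext; simp only [Fin.val_mk]; omega
              rw [hj] at hρj
              have := congrArg Fin.val hρj
              omega
        have hch2 := chain j (by omega)
        rw [hρj] at hch2
        simp only [Fin.val_mk] at hch2
        obtain ⟨b, hbdef⟩ : ∃ b, (ρ ⟨j.val - 1, lt_of_le_of_lt (Nat.sub_le _ _) j.isLt⟩).val = b := ⟨_, rfl⟩
        rw [hbdef] at hch2
        have hb : b = k ∨ b = k + 1 := by omega
        rcases hb with hb | hb
        · have : (⟨j.val - 1, lt_of_le_of_lt (Nat.sub_le _ _) j.isLt⟩ : Fin (m + 1))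
              = ⟨k, Nat.lt_of_succ_lt hk⟩ := by
            apply ρ.injective
            rw [hρk]; apply Fin.ext; simp only [Fin.val_mk]; omega
          have := congrArg Fin.val this
          simp only [Fin.val_mk] at this
          omega
        · have : (⟨j.val - 1, lt_of_le_of_lt (Nat.sub_le _ _) j.isLt⟩ : Fin (m + 1)) = j := by
            apply ρ.injective
            rw [hρj]; apply Fin.ext; simp only [Fin.val_mk]; omega
          have := congrArg Fin.val this
          simp only [Fin.val_mk] at this
          omega
  intro v
  have := key v.val v.isLt
  simpa using this


/-- The Witt algebra `W_d` satisfies no left identity in arity `≤ 2d`: if a linear combination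
of the left-nested words `f_{σ(1)} ◁ (⋯ (f_{σ(m)} ◁ f_{σ(m+1)}) ⋯)`, `σ ∈ S_{m+1}`, vanishes
on all polynomial maps and the arity `m + 1` is at most `2d`, then all coefficients vanish. -/
theorem no_left_identity_low_arity (d m : ℕ) (hd : 1 ≤ d) (hm : m + 1 ≤ 2 * d)
    (lam : Equiv.Perm (Fin (m + 1)) → ℝ)
    (h : ∀ (P : Fin (m + 1) → Fin d → MvPolynomial (Fin d) ℝ) (x : Fin d → ℝ) (j : Fin d),
      ∑ σ : Equiv.Perm (Fin (m + 1)),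
        lam σ *
          (List.ofFn (fun i : Fin m => polyMap (P (σ i.castSucc)))).foldr tri
            (polyMap (P (σ (Fin.last m)))) x j = 0) :
    ∀ σ, lam σ = 0 := by
  intro τ
  classical
  have hd0 : 0 < d := hd
  have hh := h (fun i => Ppoly d m hm (τ.symm i)) (fun _ => 1) ⟨0, hd0⟩
  have hval : ∀ σ : Equiv.Perm (Fin (m + 1)),
      (List.ofFn (fun i : Fin m => polyMap (Ppoly d m hm (τ.symm (σ i.castSucc))))).foldr tri
        (polyMap (Ppoly d m hm (τ.symm (σ (Fin.last m))))) (fun _ => 1) ⟨0, hd0⟩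
      = if (⟨0, hd0⟩ : Fin d) = bbF d m hm (τ.symm (σ 0)) then
          ∏ i : Fin m, dlt (ovF d m hm (τ.symm (σ i.castSucc))) (bbF d m hm (τ.symm (σ i.succ)))
        else 0 := by
    intro σ
    have h1 : (List.ofFn (fun i : Fin m => polyMap (Ppoly d m hm (τ.symm (σ i.castSucc)))))
        = List.map (fun p => elemF p.1 p.2.1 p.2.2)
            (List.ofFn (fun i : Fin m =>
              ((fun v => (bbF d m hm (τ.symm (σ v)), (1:ℝ), ovF d m hm (τ.symm (σ v))))
                (i.castSucc : Fin (m + 1))))) := by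
      rw [List.map_ofFn]
      congr 1
      funext i
      exact polyMap_Ppoly d m hm _
    rw [h1, polyMap_Ppoly d m hm _]
    have h2 := foldr_tri_elemF
      ((fun v => (bbF d m hm (τ.symm (σ v)), (1:ℝ), ovF d m hm (τ.symm (σ v)))) (Fin.last m))
      (List.ofFn (fun i : Fin m =>
        ((fun v => (bbF d m hm (τ.symm (σ v)), (1:ℝ), ovF d m hm (τ.symm (σ v))))
          (i.castSucc : Fin (m + 1)))))
    have h3 := resF_ofFn m
      (fun v => (bbF d m hm (τ.symm (σ v)), (1:ℝ), ovF d m hm (τ.symm (σ v))))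
      (fun v => rfl)
    rw [h3] at h2
    simp only at h2
    rw [h2, elemF_ones]
  simp only [hval] at hh
  have hside : ∀ σ ∈ Finset.univ (α := Equiv.Perm (Fin (m + 1))), σ ≠ τ →
      lam σ * (if (⟨0, hd0⟩ : Fin d) = bbF d m hm (τ.symm (σ 0)) then
          ∏ i : Fin m, dlt (ovF d m hm (τ.symm (σ i.castSucc))) (bbF d m hm (τ.symm (σ i.succ)))
        else 0) = 0 := by
    intro σ _ hστ
    by_cases hcond : (⟨0, hd0⟩ : Fin d) = bbF d m hm (τ.symm (σ 0))
    · rw [if_pos hcond]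
      have hP : (∏ i : Fin m,
          dlt (ovF d m hm (τ.symm (σ i.castSucc))) (bbF d m hm (τ.symm (σ i.succ)))) = 0 := by
        by_contra hP
        have hfac := Finset.prod_ne_zero_iff.mp hP
        have hc : ∀ i : Fin m,
            (((σ.trans τ.symm) i.castSucc).val + 1) / 2 = ((σ.trans τ.symm) i.succ).val / 2 := by
          intro i
          have hf := hfac i (Finset.mem_univ i)
          by_cases hv : (τ.symm (σ i.castSucc)).val < m
          · simp only [ovF, dif_pos hv, dlt] at hf
            have : (⟨((τ.symm (σ i.castSucc)).val + 1) / 2, by omega⟩ : Fin d)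
                = bbF d m hm (τ.symm (σ i.succ)) := by
              by_contra hne
              exact hf (if_neg hne)
            have := congrArg Fin.val this
            simpa [Equiv.trans_apply, bbF] using this
          · exfalso
            simp [ovF, dif_neg hv, dlt] at hf
        have h00 : ((σ.trans τ.symm) 0).val / 2 = 0 := by
          have := congrArg Fin.val hcond
          simp only [Equiv.trans_apply]
          simp [bbF] at this
          omega
        have hid := comb m (σ.trans τ.symm) h00 hc
        apply hστ
        ext v
        have := hid v
        simp only [Equiv.trans_apply] at this
        have h5 := congrArg τ this
        simp only [Equiv.apply_symm_apply] at h5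
        rw [h5]
      rw [hP, mul_zero]
    · rw [if_neg hcond, mul_zero]
  rw [Finset.sum_eq_single_of_mem τ (Finset.mem_univ τ) hside] at hh
  have hτval : (if (⟨0, hd0⟩ : Fin d) = bbF d m hm (τ.symm (τ 0)) then
      ∏ i : Fin m, dlt (ovF d m hm (τ.symm (τ i.castSucc))) (bbF d m hm (τ.symm (τ i.succ)))
    else 0) = 1 := by
    simp only [Equiv.symm_apply_apply]
    rw [if_pos]
    · apply Finset.prod_eq_one
      intro i _
      have hi : (i.castSucc : Fin (m + 1)).val < m := by
        simp [Fin.coe_castSucc]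
      simp only [ovF, dif_pos hi, dlt]
      rw [if_pos]
      apply Fin.ext
      simp [bbF, Fin.val_succ, Fin.coe_castSucc]
    · apply Fin.ext
      simp [bbF]
  rw [hτval, mul_one] at hh
  exact hh
end
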